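/- Let α < 0 < β, ε > 0, and let p < q with ℓ := q − p, and let ℓ_α, ℓ_β ∈ [0, ε/2] be the phase lengths of [p,q]. Assume (β−α)(ℓ + ℓ_α − ℓ_β) > 4, and assume that there exists δ > 0 such that g(x/ε) = β for almost every x ∈ (p, p + δ), or that there exists δ > 0 such that g(x/ε) = β for almost every x ∈ (q − δ, q). Then there exist no v ∈ ℝ and no Lipschitz function n : [p,q] → [−1,1] with n(p) = −1, n(q) = 1 and n'(x) = v − g(x/ε) for almost every x ∈ [p,q]; that is, the edge is not calibrable. -/

import Mathlib

open MeasureTheory Set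

/-- The 1-periodic forcing term: `α` within distance `1/4` of the integers, `β` otherwise. -/
noncomputable def g (α β x : ℝ) : ℝ := if |x - (round x : ℝ)| ≤ 1/4 then α else β

/-- The edge `[p,q]` with endpoint values `a`, `b` is calibrated with velocity `v` by the
Lipschitz field `n : [p,q] → [-1,1]` satisfying `n' = v - g(·/ε)` a.e. on `[p,q]`. -/
def Calibrates (α β ε p q a b v : ℝ) (n : ℝ → ℝ) : Prop :=
  (∃ K : NNReal, LipschitzOnWith K n (Icc p q)) ∧
  (∀ x ∈ Icc p q, n x ∈ Icc (-1 : ℝ) 1) ∧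
  n p = a ∧ n q = b ∧
  ∀ᵐ x ∂(volume.restrict (Icc p q)), HasDerivAt n (v - g α β (x / ε)) x

/-!
Integrating `n' = v - g_ε` over `[p, q]` gives `2 = v ℓ - ∫_p^q g_ε`. If `g_ε = β` near an
endpoint, then `n` has slope `v - β` there, and `n ≥ -1 = n(p)` (resp. `n ≤ 1 = n(q)`) forces
`v ≥ β`. Hence `2 ≥ β ℓ - ∫_p^q g_ε = (β - α)(ℓ + ℓ_α - ℓ_β) / 2`, contradicting the hypothesis.
-/

theorem measurable_g (α β : ℝ) : Measurable (g α β) := by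
  unfold g
  refine Measurable.ite (measurableSet_le ?_ measurable_const) measurable_const measurable_const
  simp_rw [round_eq]
  fun_prop

theorem abs_g_le (α β x : ℝ) : |g α β x| ≤ |α| + |β| := by
  unfold g
  split_ifs
  · exact le_add_of_nonneg_right (abs_nonneg β)
  · exact le_add_of_nonneg_left (abs_nonneg α)

theorem intervalIntegrable_g_div (α β ε a b : ℝ) :
    IntervalIntegrable (fun x => g α β (x / ε)) volume a b :=
  intervalIntegrable_const.mono_fun'
    ((measurable_g α β).comp (measurable_id.div_const ε)).aestronglyMeasurable
    (ae_of_all _ fun x => abs_g_le α β (x / ε))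

theorem ae_imp_of_ae_restrict_Ioo {P : ℝ → Prop} {a b : ℝ}
    (h : ∀ᵐ x ∂volume.restrict (Ioo a b), P x) : ∀ᵐ x, x ∈ Ioc a b → P x := by
  rwa [Measure.restrict_congr_set Ioo_ae_eq_Ioc, ae_restrict_iff' measurableSet_Ioc] at h

theorem LipschitzOnWith.integral_eq_sub_of_ae_hasDerivAt {f φ : ℝ → ℝ} {K : NNReal} {a b : ℝ}
    (hab : a ≤ b) (hf : LipschitzOnWith K f (Icc a b))
    (hφ : ∀ᵐ x ∂volume.restrict (Ioo a b), HasDerivAt f (φ x) x) :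
    ∫ x in a..b, φ x = f b - f a := by
  rw [← uIcc_of_le hab] at hf
  rw [← hf.absolutelyContinuousOnInterval.integral_deriv_eq_sub]
  refine intervalIntegral.integral_congr_ae ?_
  filter_upwards [ae_imp_of_ae_restrict_Ioo hφ] with x hx hxI
  rw [uIoc_of_le hab] at hxI
  exact (hx hxI).deriv.symm

namespace Calibrates

variable {α β ε p q a b v : ℝ} {n : ℝ → ℝ}

theorem sub_eq_integral (h : Calibrates α β ε p q a b v n) {c d : ℝ}
    (hpc : p ≤ c) (hcd : c ≤ d) (hdq : d ≤ q) :
    n d - n c = ∫ x in c..d, (v - g α β (x / ε)) := by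
  obtain ⟨⟨K, hK⟩, -, -, -, hder⟩ := h
  have hsub : Icc c d ⊆ Icc p q := Icc_subset_Icc hpc hdq
  exact ((hK.mono hsub).integral_eq_sub_of_ae_hasDerivAt hcd
    (ae_restrict_of_ae_restrict_of_subset (Ioo_subset_Icc_self.trans hsub) hder)).symm

theorem sub_eq_of_ae_eq (h : Calibrates α β ε p q a b v n) {c d γ : ℝ}
    (hpc : p ≤ c) (hcd : c ≤ d) (hdq : d ≤ q)
    (hγ : ∀ᵐ x ∂volume.restrict (Ioo c d), g α β (x / ε) = γ) :
    n d - n c = (v - γ) * (d - c) := by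
  have hconst : ∫ x in c..d, (v - g α β (x / ε)) = ∫ _ in c..d, (v - γ) := by
    refine intervalIntegral.integral_congr_ae ?_
    filter_upwards [ae_imp_of_ae_restrict_Ioo hγ] with x hx hxI
    rw [hx (uIoc_of_le hcd ▸ hxI)]
  rw [h.sub_eq_integral hpc hcd hdq, hconst, intervalIntegral.integral_const, smul_eq_mul,
    mul_comm]

theorem le_velocity_of_ae_eq_left (h : Calibrates α β ε p q (-1) b v n) (hpq : p < q)
    (hphase : ∃ δ > 0, ∀ᵐ x ∂volume.restrict (Ioo p (p + δ)), g α β (x / ε) = β) :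
    β ≤ v := by
  obtain ⟨δ, hδ, hg⟩ := hphase
  set r := min (p + δ) q
  have hpr : p < r := lt_min (by linarith) hpq
  have hrq : r ≤ q := min_le_right _ _
  have hslope := h.sub_eq_of_ae_eq le_rfl hpr.le hrq
    (ae_restrict_of_ae_restrict_of_subset (Ioo_subset_Ioo_right (min_le_left _ _)) hg)
  have hnr : -1 ≤ n r := (h.2.1 r ⟨hpr.le, hrq⟩).1
  rw [h.2.2.1] at hslope
  nlinarith

theorem le_velocity_of_ae_eq_right (h : Calibrates α β ε p q a 1 v n) (hpq : p < q)
    (hphase : ∃ δ > 0, ∀ᵐ x ∂volume.restrict (Ioo (q - δ) q), g α β (x / ε) = β) :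
    β ≤ v := by
  obtain ⟨δ, hδ, hg⟩ := hphase
  set r := max (q - δ) p
  have hrq : r < q := max_lt (by linarith) hpq
  have hpr : p ≤ r := le_max_right _ _
  have hslope := h.sub_eq_of_ae_eq hpr hrq.le le_rfl
    (ae_restrict_of_ae_restrict_of_subset (Ioo_subset_Ioo_left (le_max_left _ _)) hg)
  have hnr : n r ≤ 1 := (h.2.1 r ⟨hpr, hrq.le⟩).2
  rw [h.2.2.2.1] at hslope
  nlinarith

end Calibrates

theorem stmt8_general (α β ε p q lα lβ : ℝ)
    (hpq : p < q)
    (hint : ∫ s in p..q, g α β (s / ε)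
      = (α + β) / 2 * ((q - p) - lα - lβ) + α * lα + β * lβ)
    (hcond : 4 < (β - α) * ((q - p) + lα - lβ))
    (hphase : (∃ δ > 0, ∀ᵐ x ∂(volume.restrict (Ioo p (p + δ))), g α β (x / ε) = β) ∨
              (∃ δ > 0, ∀ᵐ x ∂(volume.restrict (Ioo (q - δ) q)), g α β (x / ε) = β)) :
    ¬ ∃ v : ℝ, ∃ n : ℝ → ℝ, Calibrates α β ε p q (-1) 1 v n := by
  rintro ⟨v, n, h⟩
  have hvβ : β ≤ v :=
    hphase.elim (h.le_velocity_of_ae_eq_left hpq) (h.le_velocity_of_ae_eq_right hpq)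
  have htotal := h.sub_eq_integral le_rfl hpq.le le_rfl
  rw [h.2.2.2.1, h.2.2.1, intervalIntegral.integral_sub intervalIntegrable_const
    (intervalIntegrable_g_div α β ε p q), hint, intervalIntegral.integral_const,
    smul_eq_mul] at htotal
  nlinarith [mul_le_mul_of_nonneg_right hvβ (sub_nonneg.2 hpq.le)]

theorem stmt8 (α β ε p q lα lβ : ℝ) (hα : α < 0) (hβ : 0 < β) (hε0 : 0 < ε)
    (hpq : p < q)
    (hlα0 : 0 ≤ lα) (hlα1 : lα ≤ ε / 2) (hlβ0 : 0 ≤ lβ) (hlβ1 : lβ ≤ ε / 2)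
    (hsum : lα + lβ = (q - p) - ε * (⌊(q - p) / ε⌋ : ℝ))
    (hint : ∫ s in p..q, g α β (s / ε)
      = (α + β) / 2 * ((q - p) - lα - lβ) + α * lα + β * lβ)
    (hcond : 4 < (β - α) * ((q - p) + lα - lβ))
    (hphase : (∃ δ > 0, ∀ᵐ x ∂(volume.restrict (Ioo p (p + δ))), g α β (x / ε) = β) ∨
              (∃ δ > 0, ∀ᵐ x ∂(volume.restrict (Ioo (q - δ) q)), g α β (x / ε) = β)) :
    ¬ ∃ v : ℝ, ∃ n : ℝ → ℝ, Calibrates α β ε p q (-1) 1 v n :=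
  stmt8_general α β ε p q lα lβ hpq hint hcond hphase
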